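/- Let R and S be (unital, possibly noncommutative) rings such that the tensor product R ⊗_ℤ S of the underlying abelian groups is the zero group. Let r be the characteristic of R and s the characteristic of S. Then (r, s) ≠ (0, 0); moreover, if r ≠ 0, then the image r·1_S of r in S is a unit of S. -/

import Mathlib

open scoped TensorProduct

lemma baer_zmod (n : ℕ) [NeZero n] : Module.Baer (ZMod n) (ZMod n) := by
  haveI : IsPrincipalIdealRing (ZMod n) :=
    IsPrincipalIdealRing.of_surjective (Int.castRingHom (ZMod n)) ZMod.intCast_surjective
  intro I g
  obtain ⟨m, rfl⟩ := (IsPrincipalIdealRing.principal I).principal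
  have hmem : m ∈ Ideal.span {m} := Ideal.subset_span rfl
  set v : ZMod n := g ⟨m, hmem⟩ with hv
  -- key: ∃ c, v = m * c
  have key : ∃ c : ZMod n, v = m * c := by
    set d : ℕ := Nat.gcd n m.val with hd
    have hdn : d ∣ n := Nat.gcd_dvd_left _ _
    have hdm : d ∣ m.val := Nat.gcd_dvd_right _ _
    set k : ℕ := n / d with hk
    have hdk : d * k = n := Nat.mul_div_cancel' hdn
    have hkpos : k ≠ 0 := by
      rintro h0
      rw [h0, mul_zero] at hdk
      exact (NeZero.ne n) hdk.symm
    -- (k : ZMod n) * m = 0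
    have hkm : (k : ZMod n) * m = 0 := by
      have : ((k * m.val : ℕ) : ZMod n) = 0 := by
        rw [ZMod.natCast_eq_zero_iff]
        obtain ⟨t, ht⟩ := hdm
        exact ⟨t, by rw [ht, ← hdk]; ring⟩
      rw [Nat.cast_mul, ZMod.natCast_val, ZMod.cast_id] at this
      exact this
    -- hence (k : ZMod n) * v = 0
    have hkv : (k : ZMod n) * v = 0 := by
      have : (k : ZMod n) • (⟨m, hmem⟩ : Ideal.span {m}) = 0 := by
        ext
        simpa [Submodule.coe_smul, smul_eq_mul] using hkm
      calc (k : ZMod n) * v = g ((k : ZMod n) • ⟨m, hmem⟩) := by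
            rw [map_smul, smul_eq_mul]
        _ = 0 := by rw [this, map_zero]
    -- so d ∣ v.val
    have hdv : d ∣ v.val := by
      have : ((k * v.val : ℕ) : ZMod n) = 0 := by
        rw [Nat.cast_mul, ZMod.natCast_val, ZMod.cast_id]
        exact hkv
      rw [ZMod.natCast_eq_zero_iff] at this
      obtain ⟨t, ht⟩ := this
      have : k * v.val = k * (d * t) := by rw [ht, ← hdk]; ring
      exact ⟨t, Nat.eq_of_mul_eq_mul_left (Nat.pos_of_ne_zero hkpos) this⟩
    -- d as combination : (d : ZMod n) = m * B
    have hcomb : (d : ZMod n) = m * ((Nat.gcdB n m.val : ℤ) : ZMod n) := by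
      have h1 : ((d : ℤ) : ZMod n) = ((n * Nat.gcdA n m.val + m.val * Nat.gcdB n m.val : ℤ) : ZMod n) := by
        rw [← Nat.gcd_eq_gcd_ab]
      push_cast at h1
      rw [ZMod.natCast_self, zero_mul, zero_add, ZMod.natCast_val, ZMod.cast_id] at h1
      exact_mod_cast h1
    obtain ⟨u, hu⟩ := hdv
    refine ⟨((Nat.gcdB n m.val : ℤ) : ZMod n) * u, ?_⟩
    have hvval : v = ((v.val : ℕ) : ZMod n) := by rw [ZMod.natCast_val, ZMod.cast_id]
    rw [hvval, hu, Nat.cast_mul, hcomb]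
    ring
  obtain ⟨c, hc⟩ := key
  refine ⟨LinearMap.toSpanSingleton (ZMod n) (ZMod n) c, fun x hx => ?_⟩
  obtain ⟨z, rfl⟩ := Ideal.mem_span_singleton'.mp hx
  have : (⟨z * m, hx⟩ : Ideal.span {m}) = z • ⟨m, hmem⟩ := by
    ext; simp [smul_eq_mul]
  rw [this, map_smul, ← hv, hc, LinearMap.toSpanSingleton_apply, smul_eq_mul, smul_eq_mul]
  ring



/-- If `CharP R n`, `n ≠ 0`, there is an additive map `R →+ ZMod n` sending `1` to `1`. -/
lemma exists_addHom_zmod (n : ℕ) [NeZero n] (R : Type*) [Ring R] [CharP R n] :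
    ∃ f : R →+ ZMod n, f 1 = 1 := by
  letI : Module (ZMod n) R := AddCommGroup.zmodModule (n := n) (fun x => by
    rw [nsmul_eq_mul, CharP.cast_eq_zero R n, zero_mul])
  have hinj : Function.Injective (fun c : ZMod n => c • (1 : R)) := by
    intro a b hab
    have h0 : (a - b) • (1 : R) = 0 := by
      rw [sub_smul, sub_eq_zero]; exact hab
    rw [← ZMod.intCast_zmod_cast (a - b), Int.cast_smul_eq_zsmul, zsmul_one] at h0
    have hdvd : (n : ℤ) ∣ ZMod.cast (a - b) := (CharP.intCast_eq_zero_iff R n _).mp h0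
    have h2 : ((ZMod.cast (a - b) : ℤ) : ZMod n) = 0 :=
      (ZMod.intCast_zmod_eq_zero_iff_dvd _ _).mpr hdvd
    rw [ZMod.intCast_zmod_cast] at h2
    exact sub_eq_zero.mp h2
  obtain ⟨f, hf⟩ := (baer_zmod n).extension_property
    (LinearMap.toSpanSingleton (ZMod n) R 1) hinj LinearMap.id
  refine ⟨f.toAddMonoidHom, ?_⟩
  have := LinearMap.congr_fun hf 1
  simpa using this

/-- If `CharZero R`, there is an additive map `R →+ ℚ` sending `1` to `1`. -/
lemma exists_addHom_rat (R : Type*) [Ring R] [CharZero R] :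
    ∃ f : R →+ ℚ, f 1 = 1 := by
  have hinj : Function.Injective (fun z : ℤ => z • (1 : R)) := by
    intro a b hab
    have : (a : R) = (b : R) := by simpa [zsmul_one] using hab
    exact_mod_cast this
  obtain ⟨f, hf⟩ := (Module.Baer.of_divisible ℚ).extension_property
    (LinearMap.toSpanSingleton ℤ R 1) hinj (LinearMap.toSpanSingleton ℤ ℚ 1)
  refine ⟨f.toAddMonoidHom, ?_⟩
  have := LinearMap.congr_fun hf 1
  simpa [zsmul_one] using this



/-- **Statement 14.** If `R ⊗_ℤ S = 0` for unital rings `R`, `S`, then their characteristics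
`(r, s)` satisfy `(r, s) ≠ (0, 0)`, and if `r ≠ 0` then the image of `r` in `S` is a unit. -/
theorem stmt_14 (R S : Type*) [Ring R] [Ring S]
    (h : Subsingleton (TensorProduct ℤ R S)) :
    (ringChar R, ringChar S) ≠ (0, 0) ∧
      (ringChar R ≠ 0 → IsUnit ((ringChar R : ℕ) : S)) := by
  have htens : (1 : R) ⊗ₜ[ℤ] (1 : S) = 0 := Subsingleton.elim _ _
  constructor
  · -- part 1
    intro hpair
    have hr0 : ringChar R = 0 := congrArg Prod.fst hpair
    have hs0 : ringChar S = 0 := congrArg Prod.snd hpair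
    haveI : CharP R 0 := hr0 ▸ ringChar.charP R
    haveI : CharP S 0 := hs0 ▸ ringChar.charP S
    haveI : CharZero R := CharP.charP_to_charZero R
    haveI : CharZero S := CharP.charP_to_charZero S
    obtain ⟨f, hf⟩ := exists_addHom_rat R
    obtain ⟨g, hg⟩ := exists_addHom_rat S
    let b : R →ₗ[ℤ] S →ₗ[ℤ] ℚ := LinearMap.mk₂ ℤ (fun x y => f x * g y)
      (fun x x' y => by rw [map_add, add_mul])
      (fun z x y => by rw [map_zsmul, smul_mul_assoc])
      (fun x y y' => by rw [map_add, mul_add])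
      (fun z x y => by rw [map_zsmul, mul_smul_comm])
    have h0 := congrArg (TensorProduct.lift b) htens
    rw [map_zero, TensorProduct.lift.tmul] at h0
    simp only [b, LinearMap.mk₂_apply, hf, hg, mul_one] at h0
    exact one_ne_zero h0
  · -- part 2
    intro hr
    haveI : NeZero (ringChar R) := ⟨hr⟩
    set r : ℕ := ringChar R with hrdef
    haveI : CharP R r := ringChar.charP R
    obtain ⟨f, hf⟩ := exists_addHom_zmod r R
    set N : Submodule ℤ S := LinearMap.range ((r : ℤ) • (LinearMap.id : S →ₗ[ℤ] S)) with hN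
    letI : Module (ZMod r) (S ⧸ N) := AddCommGroup.zmodModule (n := r) (fun x => by
      obtain ⟨y, rfl⟩ := Submodule.Quotient.mk_surjective N x
      rw [← natCast_zsmul, ← Submodule.Quotient.mk_smul, Submodule.Quotient.mk_eq_zero]
      exact ⟨y, by rw [LinearMap.smul_apply, LinearMap.id_apply]⟩)
    have hcomp1 : ∀ (z : ℤ) (c : ZMod r) (v : S ⧸ N), (z • c) • v = z • (c • v) := by
      intro z c v
      rw [zsmul_eq_mul, mul_smul, Int.cast_smul_eq_zsmul]
    have hcomp2 : ∀ (z : ℤ) (c : ZMod r) (v : S ⧸ N), c • (z • v) = z • (c • v) := by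
      intro z c v
      rw [← Int.cast_smul_eq_zsmul (ZMod r), smul_smul, mul_comm, ← smul_smul,
        Int.cast_smul_eq_zsmul]
    let b : R →ₗ[ℤ] S →ₗ[ℤ] (S ⧸ N) := LinearMap.mk₂ ℤ
      (fun x y => f x • Submodule.Quotient.mk y)
      (fun x x' y => by rw [map_add, add_smul])
      (fun z x y => by rw [map_zsmul, hcomp1])
      (fun x y y' => by rw [Submodule.Quotient.mk_add, smul_add])
      (fun z x y => by rw [Submodule.Quotient.mk_smul, hcomp2])
    have h0 := congrArg (TensorProduct.lift b) htens
    rw [map_zero, TensorProduct.lift.tmul] at h0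
    simp only [b, LinearMap.mk₂_apply, hf, one_smul] at h0
    rw [Submodule.Quotient.mk_eq_zero] at h0
    obtain ⟨x, hx⟩ := h0
    have h1 : (r : S) * x = 1 := by
      have : (r : ℤ) • x = 1 := by
        simpa using hx
      rwa [natCast_zsmul, nsmul_eq_mul] at this
    have h2 : x * (r : S) = 1 := (Nat.cast_commute r x).eq ▸ h1
    exact ⟨⟨(r : S), x, h1, h2⟩, rfl⟩
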